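/- arXiv:2002.09587 — 2 statements merged into one kernel-verified Lean document; each statement's English description precedes it below -/
import Mathlib

section
/- Let X₁, ..., X_k be random variables (not necessarily independent) with ‖X_i‖_{ψ_{α_i}} < ∞ for some α_i ∈ (0,1], and let t = (∑_{i=1}^k α_i^{-1})^{-1}. Then ‖∏_{i=1}^k X_i‖_{ψ_t} ≤ ∏_{i=1}^k ‖X_i‖_{ψ_{α_i}}. -/
/-!
With the weights `w i = t / α i`, which sum to one, weighted AM–GM followed by convexity of `exp`
gives pointwise `exp ((∏ i, |X i| / s i) ^ t) ≤ ∑ i, w i * exp ((|X i| / s i) ^ α i)`. Integrating,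
if every scale `s i` is admissible for `X i` (the `ψ_{α i}` integral is at most `2`), then `∏ i, s i`
is admissible for `∏ i, X i`; no independence is involved. Letting the `s i` decrease to the
norms gives the bound.
-/

open MeasureTheory ENNReal Filter Topology

/-- The exponential Orlicz quasi-norm `‖X‖_{ψ_α}`, with `sInf ∅ = ∞`. -/
noncomputable def psiNorm {Ω : Type*} [MeasurableSpace Ω] (μ : Measure Ω) (α : ℝ)
    (X : Ω → ℝ) : ℝ≥0∞ :=
  sInf {t : ℝ≥0∞ | t ≠ 0 ∧ t ≠ ⊤ ∧
    ∫⁻ ω, ENNReal.ofReal (Real.exp (|X ω| ^ α / t.toReal ^ α)) ∂μ ≤ 2}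

theorem ENNReal.le_prod_sInf {ι : Type*} [Fintype ι] {S : ι → Set ℝ≥0∞} {a : ℝ≥0∞}
    (hS : ∀ i, sInf (S i) ≠ ∞) (h : ∀ c : ι → ℝ≥0∞, (∀ i, c i ∈ S i) → a ≤ ∏ i, c i) :
    a ≤ ∏ i, sInf (S i) := by
  have hlim : Tendsto (fun ε => ∏ i, (sInf (S i) + ε)) (𝓝[>] 0) (𝓝 (∏ i, sInf (S i))) := by
    have hcont (i : ι) : Tendsto (fun ε => sInf (S i) + ε) (𝓝[>] 0) (𝓝 (sInf (S i))) := by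
      simpa using (tendsto_const_nhds (x := sInf (S i))).add
        (tendsto_nhdsWithin_of_tendsto_nhds (tendsto_id (x := 𝓝 (0 : ℝ≥0∞))))
    exact tendsto_finsetProd_of_ne_top _ (fun i _ => hcont i) (fun i _ => hS i)
  refine ge_of_tendsto hlim ?_
  filter_upwards [self_mem_nhdsWithin] with ε (hε : 0 < ε)
  have hnear (i : ι) : ∃ c ∈ S i, c < sInf (S i) + ε :=
    sInf_lt_iff.1 (ENNReal.lt_add_right (hS i) hε.ne')
  choose c hcS hclt using hnear
  exact (h c hcS).trans (Finset.prod_le_prod' fun i _ => (hclt i).le)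

theorem Real.exp_prod_rpow_le_sum_mul_exp {ι : Type*} [Fintype ι] {w α x : ι → ℝ} {t : ℝ}
    (hw : ∀ i, 0 ≤ w i) (hw1 : ∑ i, w i = 1) (hαw : ∀ i, α i * w i = t)
    (hx : ∀ i, 0 ≤ x i) :
    Real.exp ((∏ i, x i) ^ t) ≤ ∑ i, w i * Real.exp (x i ^ α i) := by
  have hsplit : (∏ i, x i) ^ t = ∏ i, (x i ^ α i) ^ w i := by
    rw [← Real.finsetProd_rpow _ _ fun i _ => hx i]
    exact Finset.prod_congr rfl fun i _ => by rw [← Real.rpow_mul (hx i), hαw i]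
  calc Real.exp ((∏ i, x i) ^ t)
      ≤ Real.exp (∑ i, w i * x i ^ α i) := by
        rw [hsplit, Real.exp_le_exp]
        exact Real.geom_mean_le_arith_mean_weighted _ _ _ (fun i _ => hw i) hw1
          fun i _ => Real.rpow_nonneg (hx i) _
    _ ≤ ∑ i, w i * Real.exp (x i ^ α i) := by
        simpa using convexOn_exp.map_sum_le (t := Finset.univ) (fun i _ => hw i) hw1
          fun i _ => Set.mem_univ (x i ^ α i)

def PsiAdmissible {Ω : Type*} [MeasurableSpace Ω] (μ : Measure Ω) (α : ℝ) (X : Ω → ℝ)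
    (u : ℝ≥0∞) : Prop :=
  u ≠ 0 ∧ u ≠ ⊤ ∧ ∫⁻ ω, ENNReal.ofReal (Real.exp (|X ω| ^ α / u.toReal ^ α)) ∂μ ≤ 2

theorem PsiAdmissible.prod {Ω ι : Type*} [MeasurableSpace Ω] [Fintype ι] {μ : Measure Ω}
    {w α : ι → ℝ} {t : ℝ} (hw : ∀ i, 0 ≤ w i) (hw1 : ∑ i, w i = 1)
    (hαw : ∀ i, α i * w i = t) {X : ι → Ω → ℝ} (hX : ∀ i, Measurable (X i))
    {s : ι → ℝ≥0∞} (hs : ∀ i, PsiAdmissible μ (α i) (X i) (s i)) :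
    PsiAdmissible μ t (fun ω => ∏ i, X i ω) (∏ i, s i) := by
  refine ⟨Finset.prod_ne_zero_iff.2 fun i _ => (hs i).1,
    ENNReal.prod_ne_top fun i _ => (hs i).2.1, ?_⟩
  have hσ (i : ι) : 0 < (s i).toReal := ENNReal.toReal_pos (hs i).1 (hs i).2.1
  have hpointwise (ω : Ω) :
      Real.exp (|∏ i, X i ω| ^ t / (∏ i, s i).toReal ^ t) ≤
        ∑ i, w i * Real.exp (|X i ω| ^ α i / (s i).toReal ^ α i) := by
    have := Real.exp_prod_rpow_le_sum_mul_exp hw hw1 hαw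
      (x := fun i => |X i ω| / (s i).toReal) fun i => div_nonneg (abs_nonneg _) (hσ i).le
    rw [Finset.prod_div_distrib, ← Finset.abs_prod, ← ENNReal.toReal_prod,
      Real.div_rpow (abs_nonneg _) ENNReal.toReal_nonneg] at this
    simpa only [Real.div_rpow (abs_nonneg _) ENNReal.toReal_nonneg] using this
  set F : ι → Ω → ℝ≥0∞ := fun i ω =>
    ENNReal.ofReal (Real.exp (|X i ω| ^ α i / (s i).toReal ^ α i))
  have hF (i : ι) : Measurable (F i) :=
    ((((hX i).abs.pow_const _).div_const _).exp).ennreal_ofReal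
  calc ∫⁻ ω, ENNReal.ofReal (Real.exp (|∏ i, X i ω| ^ t / (∏ i, s i).toReal ^ t)) ∂μ
      ≤ ∫⁻ ω, ∑ i, ENNReal.ofReal (w i) * F i ω ∂μ := by
        refine lintegral_mono fun ω => (ENNReal.ofReal_le_ofReal (hpointwise ω)).trans_eq ?_
        rw [ENNReal.ofReal_sum_of_nonneg fun i _ => mul_nonneg (hw i) (Real.exp_pos _).le]
        simp only [F, ENNReal.ofReal_mul (hw _)]
    _ = ∑ i, ENNReal.ofReal (w i) * ∫⁻ ω, F i ω ∂μ := by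
        rw [lintegral_finsetSum _ fun i _ => (hF i).const_mul _]
        simp only [lintegral_const_mul _ (hF _)]
    _ ≤ ∑ i, ENNReal.ofReal (w i) * 2 := by
        gcongr with i
        exact (hs i).2.2
    _ = 2 := by
        rw [← Finset.sum_mul, ← ENNReal.ofReal_sum_of_nonneg fun i _ => hw i, hw1,
          ENNReal.ofReal_one, one_mul]

theorem stmt_2_general {Ω : Type*} [MeasurableSpace Ω] (μ : Measure Ω)
    (k : ℕ) (hk : 0 < k) (α : Fin k → ℝ) (hα : ∀ i, α i ∈ Set.Ioc (0 : ℝ) 1)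
    (X : Fin k → Ω → ℝ) (hX : ∀ i, Measurable (X i))
    (hfin : ∀ i, psiNorm μ (α i) (X i) ≠ ⊤)
    (t : ℝ) (ht : t = (∑ i, (α i)⁻¹)⁻¹) :
    psiNorm μ t (fun ω => ∏ i, X i ω) ≤ ∏ i, psiNorm μ (α i) (X i) := by
  have : Nonempty (Fin k) := ⟨⟨0, hk⟩⟩
  have hα0 (i : Fin k) : 0 < α i := (hα i).1
  have hsum : 0 < ∑ i, (α i)⁻¹ :=
    Finset.sum_pos (fun i _ => inv_pos.2 (hα0 i)) Finset.univ_nonempty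
  set w : Fin k → ℝ := fun i => t / α i
  have hw (i : Fin k) : 0 ≤ w i := div_nonneg (ht ▸ (inv_pos.2 hsum).le) (hα0 i).le
  have hw1 : ∑ i, w i = 1 := by
    simp only [w, div_eq_mul_inv, ← Finset.mul_sum, ht, inv_mul_cancel₀ hsum.ne']
  have hαw (i : Fin k) : α i * w i = t := mul_div_cancel₀ t (hα0 i).ne'
  exact ENNReal.le_prod_sInf (S := fun i => {u | PsiAdmissible μ (α i) (X i) u}) hfin
    fun s hs => sInf_le (PsiAdmissible.prod hw hw1 hαw hX hs)

/-- Orlicz norm of a product of (not necessarily independent) random variables: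
if `‖X i‖_{ψ_{α i}} < ∞` with `α i ∈ (0,1]` and `t = (∑ i, (α i)⁻¹)⁻¹`, then
`‖∏ i, X i‖_{ψ_t} ≤ ∏ i, ‖X i‖_{ψ_{α i}}`. -/
theorem stmt_2 {Ω : Type*} [MeasurableSpace Ω] (μ : Measure Ω) [IsProbabilityMeasure μ]
    (k : ℕ) (hk : 0 < k) (α : Fin k → ℝ) (hα : ∀ i, α i ∈ Set.Ioc (0 : ℝ) 1)
    (X : Fin k → Ω → ℝ) (hX : ∀ i, Measurable (X i))
    (hfin : ∀ i, psiNorm μ (α i) (X i) ≠ ⊤)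
    (t : ℝ) (ht : t = (∑ i, (α i)⁻¹)⁻¹) :
    psiNorm μ t (fun ω => ∏ i, X i ω) ≤ ∏ i, psiNorm μ (α i) (X i) :=
  stmt_2_general μ k hk α hα X hX hfin t ht
end

section
/- Let X₁, ..., X_n be independent random variables with E X_i = 0 and ‖X_i‖_{ψ_{2/3}} ≤ M for all i. Then there exists an absolute constant C such that for all t > 0, P(|(1/n)∑_{i=1}^n X_i| ≥ t) ≤ 2·exp(−(1/C)·min(t²n/M², tn/M, (tn/M)^{2/3})). -/
open MeasureTheory ENNReal
open MeasureTheory ProbabilityTheory Real ENNReal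

lemma aux_exp_quad {x : ℝ} (hx : x ≤ 1) : Real.exp x ≤ 1 + x + x ^ 2 := by
  rcases le_or_gt (-1) x with h | h
  · have hb := Real.exp_bound (x := x) (by rw [abs_le]; exact ⟨h, hx⟩) (n := 2) (by norm_num)
    have h2 : Real.exp x - (1 + x) ≤ |x| ^ 2 * (3 / 4) := by
      have := abs_le.1 hb
      simp [Finset.sum_range_succ] at this ⊢
      nlinarith [this.2]
    nlinarith [sq_abs x, sq_nonneg x]
  · have h1 : Real.exp x < Real.exp 0 := Real.exp_lt_exp.2 (by linarith)
    rw [Real.exp_zero] at h1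
    nlinarith [sq_nonneg x]

lemma aux_two_rpow {x y : ℝ} (hx : 0 ≤ x) (hy : 0 ≤ y) :
    (x + y) ^ ((2:ℝ)/3) ≤ x ^ ((2:ℝ)/3) + y ^ ((2:ℝ)/3) := by
  have h := NNReal.rpow_add_rpow_le (x.toNNReal) (y.toNNReal) (p := (2:ℝ)/3) (q := 1)
    (by norm_num) (by norm_num)
  simp only [NNReal.rpow_one, one_div_one, NNReal.rpow_natCast] at h
  have h' : (x.toNNReal + y.toNNReal : NNReal) ≤
      (x.toNNReal ^ ((2:ℝ)/3) + y.toNNReal ^ ((2:ℝ)/3)) ^ ((1:ℝ)/((2:ℝ)/3)) := by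
    simpa using h
  have h2 := NNReal.rpow_le_rpow h' (z := (2:ℝ)/3) (by norm_num)
  rw [← NNReal.rpow_mul] at h2
  have : (1:ℝ)/((2:ℝ)/3) * ((2:ℝ)/3) = 1 := by norm_num
  rw [this, NNReal.rpow_one] at h2
  have hcoe : ((x.toNNReal + y.toNNReal : NNReal) : ℝ) = x + y := by
    simp [Real.coe_toNNReal, hx, hy]
  calc (x + y) ^ ((2:ℝ)/3) = ((x.toNNReal + y.toNNReal : NNReal) : ℝ) ^ ((2:ℝ)/3) := by rw [hcoe]
    _ = (((x.toNNReal + y.toNNReal : NNReal) ^ ((2:ℝ)/3) : NNReal) : ℝ) := by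
        rw [NNReal.coe_rpow]
    _ ≤ (((x.toNNReal ^ ((2:ℝ)/3) + y.toNNReal ^ ((2:ℝ)/3) : NNReal)) : ℝ) := by
        exact_mod_cast h2
    _ = x ^ ((2:ℝ)/3) + y ^ ((2:ℝ)/3) := by
        push_cast [NNReal.coe_rpow]
        rw [Real.coe_toNNReal _ hx, Real.coe_toNNReal _ hy]

lemma aux_sum_rpow {ι : Type*} (s : Finset ι) (f : ι → ℝ) (hf : ∀ i, 0 ≤ f i) :
    (∑ i ∈ s, f i) ^ ((2:ℝ)/3) ≤ ∑ i ∈ s, (f i) ^ ((2:ℝ)/3) := by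
  classical
  induction s using Finset.induction_on with
  | empty => simp [Real.zero_rpow (by norm_num : ((2:ℝ)/3) ≠ 0)]
  | @insert a s ha ih =>
      rw [Finset.sum_insert ha, Finset.sum_insert ha]
      calc (f a + ∑ i ∈ s, f i) ^ ((2:ℝ)/3)
          ≤ (f a) ^ ((2:ℝ)/3) + (∑ i ∈ s, f i) ^ ((2:ℝ)/3) :=
            aux_two_rpow (hf a) (Finset.sum_nonneg fun i _ => hf i)
        _ ≤ (f a) ^ ((2:ℝ)/3) + ∑ i ∈ s, (f i) ^ ((2:ℝ)/3) := by linarith [ih]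


lemma aux_cube' {w : ℝ} (hw : 0 ≤ w) : w ^ 3 ≤ 27 * Real.exp w := by
  have h : w / 3 ≤ Real.exp (w / 3) := by linarith [Real.add_one_le_exp (w/3)]
  have h3 : (w/3) ^ 3 ≤ (Real.exp (w/3)) ^ 3 := pow_le_pow_left₀ (by positivity) h 3
  rw [← Real.exp_nat_mul] at h3
  have e : ((3:ℕ):ℝ) * (w/3) = w := by push_cast; ring
  rw [e] at h3; nlinarith [h3]

lemma aux_sq16' {w : ℝ} (hw : 0 ≤ w) : w ^ 2 ≤ 16 * Real.exp (w / 2) := by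
  have h : w / 4 ≤ Real.exp (w / 4) := by linarith [Real.add_one_le_exp (w/4)]
  have h2 : (w/4) ^ 2 ≤ (Real.exp (w/4)) ^ 2 := pow_le_pow_left₀ (by positivity) h 2
  rw [← Real.exp_nat_mul] at h2
  have e : ((2:ℕ):ℝ) * (w/4) = w/2 := by push_cast; ring
  rw [e] at h2; nlinarith [h2]

lemma aux_rpow32' {w : ℝ} (hw : 0 ≤ w) : w ^ ((3:ℝ)/2) ≤ w ^ 2 + 1 := by
  rcases le_or_gt w 1 with h | h
  · have : w ^ ((3:ℝ)/2) ≤ 1 := Real.rpow_le_one hw h (by norm_num)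
    nlinarith [sq_nonneg w]
  · have h2 : w ^ ((3:ℝ)/2) ≤ w ^ ((2:ℝ)) :=
      Real.rpow_le_rpow_of_exponent_le h.le (by norm_num)
    rw [show ((2:ℝ)) = ((2:ℕ):ℝ) by norm_num, Real.rpow_natCast] at h2
    linarith

section pt
variable {a M ρ w : ℝ}

lemma pt_w (ha : 0 ≤ a) (hM : 0 < M) (hw : w = a ^ ((2:ℝ)/3) / ((3/2)*M) ^ ((2:ℝ)/3)) :
    w = (a / ((3/2)*M)) ^ ((2:ℝ)/3) ∧ 0 ≤ w ∧ a = (3/2)*M * w ^ ((3:ℝ)/2) := by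
  have hM' : (0:ℝ) < (3/2)*M := by linarith
  have h1 : w = (a / ((3/2)*M)) ^ ((2:ℝ)/3) := by
    rw [hw, Real.div_rpow ha hM'.le]
  have h2 : (0:ℝ) ≤ w := by rw [h1]; positivity
  refine ⟨h1, h2, ?_⟩
  have h3 : w ^ ((3:ℝ)/2) = a / ((3/2)*M) := by
    rw [h1, ← Real.rpow_mul (by positivity)]
    norm_num
  rw [h3]; field_simp

lemma pt_cube (hw : 0 ≤ w) (hM : 0 < M) (hab : a = (3/2)*M * w ^ ((3:ℝ)/2)) :
    a ^ 2 ≤ 61 * M^2 * Real.exp w := by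
  have h1 : (w ^ ((3:ℝ)/2)) ^ 2 = w ^ 3 := by
    rw [← Real.rpow_natCast (w ^ ((3:ℝ)/2)) 2, ← Real.rpow_mul hw,
      show (3:ℝ)/2 * ((2:ℕ):ℝ) = ((3:ℕ):ℝ) by push_cast; norm_num, Real.rpow_natCast]
  have h2 := aux_cube' hw
  have : a^2 = (3/2*M)^2 * (w ^ ((3:ℝ)/2))^2 := by rw [hab]; ring
  rw [this, h1]
  nlinarith [sq_nonneg M, Real.exp_pos w]

lemma pt_abs (hw : 0 ≤ w) (hM : 0 < M) (hab : a = (3/2)*M * w ^ ((3:ℝ)/2)) :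
    a ≤ 44 * M * Real.exp w := by
  have h1 := aux_rpow32' hw
  have h2 : w^2 ≤ w^3 + 1 := by nlinarith [sq_nonneg w, sq_nonneg (w-1)]
  have h3 := aux_cube' hw
  have h4 : (1:ℝ) ≤ Real.exp w := by rw [← Real.exp_zero]; exact Real.exp_le_exp.2 hw
  nlinarith

lemma pt_wlb (ha : 0 ≤ a) (hM : 0 < M) (hρ : 0 ≤ ρ)
    (hw' : w = (a / ((3/2)*M)) ^ ((2:ℝ)/3)) (hR : M * ρ ^ ((3:ℝ)/2) ≤ a) :
    2/3 * ρ ≤ w := by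
  have hM' : (0:ℝ) < (3/2)*M := by linarith
  have hρ32 : (0:ℝ) ≤ ρ ^ ((3:ℝ)/2) := by positivity
  have h1 : (2/3) * ρ ^ ((3:ℝ)/2) ≤ a / ((3/2)*M) := by
    rw [le_div_iff₀ hM']; nlinarith
  have h2 : ((2/3) * ρ ^ ((3:ℝ)/2)) ^ ((2:ℝ)/3) ≤ w := by
    rw [hw']; exact Real.rpow_le_rpow (by positivity) h1 (by norm_num)
  have h3 : ((2/3 : ℝ) * ρ ^ ((3:ℝ)/2)) ^ ((2:ℝ)/3)
      = (2/3 : ℝ) ^ ((2:ℝ)/3) * ρ := by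
    rw [Real.mul_rpow (by norm_num) hρ32, ← Real.rpow_mul hρ]
    norm_num
  have h4 : (2/3 : ℝ) ≤ (2/3 : ℝ) ^ ((2:ℝ)/3) := by
    have := Real.rpow_le_rpow_of_exponent_ge (x := (2/3:ℝ)) (by norm_num) (by norm_num)
      (show (2:ℝ)/3 ≤ 1 by norm_num)
    rwa [Real.rpow_one] at this
  nlinarith [h2, h3, h4, hρ]

lemma pt_tail (hw : 0 ≤ w) (hM : 0 < M) (hρ : 0 ≤ ρ)
    (hab : a = (3/2)*M * w ^ ((3:ℝ)/2)) (hwlb : 2/3 * ρ ≤ w) :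
    a ≤ 26 * M * Real.exp (-(ρ/3)) * Real.exp w := by
  have h1 := aux_rpow32' hw
  have h2 := aux_sq16' hw
  have h4 : (1:ℝ) ≤ Real.exp (w/2) := by rw [← Real.exp_zero]; exact Real.exp_le_exp.2 (by linarith)
  have h5 : a ≤ (3/2)*M * 17 * Real.exp (w/2) := by nlinarith
  have h6 : Real.exp (w/2) ≤ Real.exp (-(ρ/3)) * Real.exp w := by
    rw [← Real.exp_add]
    exact Real.exp_le_exp.2 (by linarith)
  nlinarith [Real.exp_pos (w/2), Real.exp_pos (-(ρ/3)), Real.exp_pos w]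

lemma pt_quarter (ha : 0 ≤ a) (hM : 0 < M)
    (hw' : w = (a / ((3/2)*M)) ^ ((2:ℝ)/3)) :
    a ^ ((2:ℝ)/3) * ((12*M) ^ ((2:ℝ)/3))⁻¹ = w / 4 := by
  have hM' : (0:ℝ) < 12*M := by linarith
  have h1 : a ^ ((2:ℝ)/3) * ((12*M) ^ ((2:ℝ)/3))⁻¹ = (a / (12*M)) ^ ((2:ℝ)/3) := by
    rw [Real.div_rpow ha hM'.le]; ring
  have h2 : a / (12*M) = (a / ((3/2)*M)) * (1/8) := by field_simp; ring
  rw [h1, h2, Real.mul_rpow (by positivity) (by norm_num)]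
  have h3 : ((1:ℝ)/8) ^ ((2:ℝ)/3) = 1/4 := by
    rw [show ((1:ℝ)/8) = ((1/2:ℝ)) ^ ((3:ℕ):ℝ) by norm_num [Real.rpow_natCast],
      ← Real.rpow_mul (by norm_num)]
    norm_num [Real.rpow_natCast]
  rw [h3, hw']; ring

end pt


lemma psi_extract {Ω : Type*} [MeasurableSpace Ω] (μ : Measure Ω)
    (X : Ω → ℝ) (M : ℝ) (hM : 0 < M)
    (h : psiNorm μ (2 / 3) X ≤ ENNReal.ofReal M) :
    ∫⁻ ω, ENNReal.ofReal (Real.exp (|X ω| ^ ((2:ℝ)/3) / ((3/2)*M) ^ ((2:ℝ)/3))) ∂μ ≤ 2 := by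
  have hlt : psiNorm μ (2 / 3) X < ENNReal.ofReal ((3/2)*M) :=
    lt_of_le_of_lt h (by
      rw [ENNReal.ofReal_lt_ofReal_iff (by linarith)]
      linarith)
  rw [psiNorm, sInf_lt_iff] at hlt
  obtain ⟨b, ⟨hb0, hbtop, hbint⟩, hblt⟩ := hlt
  have hbR : b.toReal ≤ (3/2)*M := by
    have := ENNReal.toReal_mono (by simp) hblt.le
    rwa [ENNReal.toReal_ofReal (by linarith)] at this
  have hbpos : 0 < b.toReal := ENNReal.toReal_pos hb0 hbtop
  refine le_trans (lintegral_mono fun ω => ?_) hbint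
  apply ENNReal.ofReal_le_ofReal
  apply Real.exp_le_exp.2
  apply div_le_div_of_nonneg_left (by positivity) (by positivity)
  exact Real.rpow_le_rpow hbpos.le hbR (by norm_num)

lemma psi_G {Ω : Type*} [MeasurableSpace Ω] (μ : Measure Ω) [IsProbabilityMeasure μ]
    (X : Ω → ℝ) (hXm : Measurable X) (M : ℝ) (hM : 0 < M)
    (h : psiNorm μ (2 / 3) X ≤ ENNReal.ofReal M) :
    Integrable (fun ω => Real.exp (|X ω| ^ ((2:ℝ)/3) / ((3/2)*M) ^ ((2:ℝ)/3))) μ ∧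
    ∫ ω, Real.exp (|X ω| ^ ((2:ℝ)/3) / ((3/2)*M) ^ ((2:ℝ)/3)) ∂μ ≤ 2 := by
  set G := fun ω => Real.exp (|X ω| ^ ((2:ℝ)/3) / ((3/2)*M) ^ ((2:ℝ)/3)) with hG
  have hGm : Measurable G := by
    apply Measurable.exp
    apply Measurable.div_const
    exact (Real.continuous_rpow_const (by norm_num : (0:ℝ) ≤ 2/3)).measurable.comp hXm.abs
  have hkey := psi_extract μ X M hM h
  have hnn : 0 ≤ᵐ[μ] G := Filter.Eventually.of_forall fun ω => (Real.exp_pos _).le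
  have hInt : Integrable G μ := by
    refine ⟨hGm.aestronglyMeasurable, ?_⟩
    rw [hasFiniteIntegral_iff_ofReal hnn]
    exact lt_of_le_of_lt hkey (by norm_num)
  refine ⟨hInt, ?_⟩
  rw [integral_eq_lintegral_of_nonneg_ae hnn hGm.aestronglyMeasurable]
  calc (∫⁻ ω, ENNReal.ofReal (G ω) ∂μ).toReal ≤ (2 : ℝ≥0∞).toReal :=
        ENNReal.toReal_mono (by norm_num) hkey
    _ = 2 := by norm_num


lemma num_pow_e {r : ℝ} (hr : 2.7182818283 ≤ r) (n : ℕ) : (2.7182818283:ℝ)^n ≤ r^n :=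
  pow_le_pow_left₀ (by norm_num) hr n

lemma num_exp6 : (208:ℝ) ≤ Real.exp 6 := by
  have h6 : Real.exp 1 ^ (6:ℕ) = Real.exp 6 := by rw [Real.exp_one_pow]; norm_num
  have h1 := num_pow_e Real.exp_one_gt_d9.le 6
  have h2 : (208:ℝ) ≤ (2.7182818283:ℝ)^(6:ℕ) := by norm_num
  linarith [h6 ▸ (h2.trans h1)]

lemma num_exp103 : (26:ℝ) ≤ Real.exp (10/3) := by
  have h3 : Real.exp 1 ^ (3:ℕ) = Real.exp 3 := by rw [Real.exp_one_pow]; norm_num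
  have h1 := num_pow_e Real.exp_one_gt_d9.le 3
  have h2 : (19:ℝ) ≤ (2.7182818283:ℝ)^(3:ℕ) := by norm_num
  have h13 : (4/3 : ℝ) ≤ Real.exp (1/3) := by
    have := Real.add_one_le_exp (1/3 : ℝ); linarith
  have he : Real.exp (10/3 : ℝ) = Real.exp 3 * Real.exp (1/3) := by
    rw [← Real.exp_add]; norm_num
  have h19 : (19:ℝ) ≤ Real.exp 3 := by linarith [h3 ▸ (h2.trans h1)]
  rw [he]
  nlinarith [Real.exp_pos (1/3 : ℝ)]

lemma num_one_le_rpow {N p : ℝ} (hN : 1 ≤ N) (hp : 0 ≤ p) : (1:ℝ) ≤ N ^ p := by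
  calc (1:ℝ) = (1:ℝ) ^ p := (Real.one_rpow p).symm
    _ ≤ N ^ p := Real.rpow_le_rpow (by norm_num) hN hp

lemma num_rho_ub {N : ℝ} (hN : 1 ≤ N) :
    6*Real.log (208*N) + 10 ≤ 100 * N ^ ((1:ℝ)/9) := by
  have h1 : Real.log (208*N) = Real.log 208 + Real.log N :=
    Real.log_mul (by norm_num) (by linarith)
  have h2 : Real.log 208 ≤ 6 := by
    calc Real.log 208 ≤ Real.log (Real.exp 6) :=
          Real.log_le_log (by norm_num) num_exp6
      _ = 6 := Real.log_exp 6
  have h3 : Real.log N ≤ 9 * N ^ ((1:ℝ)/9) := by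
    have hp : (0:ℝ) < N ^ ((1:ℝ)/9) := by positivity
    have := Real.log_le_sub_one_of_pos hp
    have hl : Real.log (N ^ ((1:ℝ)/9)) = (1/9) * Real.log N := Real.log_rpow (by linarith) _
    rw [hl] at this; linarith
  have h4 := num_one_le_rpow hN (show (0:ℝ) ≤ 1/9 by norm_num)
  linarith

lemma num_rho32 {N : ℝ} (hN : 1 ≤ N) {ρ : ℝ} (h0 : 0 ≤ ρ) (hub : ρ ≤ 100 * N ^ ((1:ℝ)/9)) :
    ρ ^ ((3:ℝ)/2) ≤ 1000 * N ^ ((1:ℝ)/6) := by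
  have hN0 : (0:ℝ) ≤ N := by linarith
  have h1 : ρ ^ ((3:ℝ)/2) ≤ (100 * N ^ ((1:ℝ)/9)) ^ ((3:ℝ)/2) :=
    Real.rpow_le_rpow h0 hub (by norm_num)
  have h2 : ((100:ℝ) * N ^ ((1:ℝ)/9)) ^ ((3:ℝ)/2)
      = (100:ℝ) ^ ((3:ℝ)/2) * N ^ ((1:ℝ)/6) := by
    rw [Real.mul_rpow (by norm_num) (by positivity), ← Real.rpow_mul hN0]
    norm_num
  have h3 : (100:ℝ) ^ ((3:ℝ)/2) = 1000 := by
    rw [show (100:ℝ) = (10:ℝ) ^ ((2:ℕ):ℝ) by norm_num [Real.rpow_natCast],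
      ← Real.rpow_mul (by norm_num)]
    norm_num [Real.rpow_natCast]
  rw [h2, h3] at h1; exact h1

lemma num_u13 {u N : ℝ} (hN : 1 ≤ N) (hu : 729 * Real.sqrt N ≤ u) :
    9 * N ^ ((1:ℝ)/6) ≤ u ^ ((1:ℝ)/3) := by
  have h0 : (0:ℝ) ≤ 729 * Real.sqrt N := by positivity
  have h1 : (729 * Real.sqrt N) ^ ((1:ℝ)/3) ≤ u ^ ((1:ℝ)/3) :=
    Real.rpow_le_rpow h0 hu (by norm_num)
  have h2 : ((729:ℝ) * Real.sqrt N) ^ ((1:ℝ)/3) = 9 * N ^ ((1:ℝ)/6) := by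
    rw [Real.mul_rpow (by norm_num) (Real.sqrt_nonneg N), Real.sqrt_eq_rpow,
      ← Real.rpow_mul (by linarith : (0:ℝ) ≤ N)]
    rw [show (729:ℝ) = (9:ℝ)^((3:ℕ):ℝ) by norm_num [Real.rpow_natCast],
      ← Real.rpow_mul (by norm_num)]
    norm_num
  rw [h2] at h1; exact h1


section OV
variable {Ω : Type} [MeasurableSpace Ω] {μ : Measure Ω} [IsProbabilityMeasure μ]
  {X : Ω → ℝ} {M ρ : ℝ}

/-- truncation -/
noncomputable def trunc (R x : ℝ) : ℝ := if |x| ≤ R then x else 0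

lemma trunc_meas (R : ℝ) : Measurable (trunc R) := by
  unfold trunc
  exact Measurable.ite (measurableSet_le measurable_abs measurable_const)
    measurable_id measurable_const

lemma trunc_abs_le (R x : ℝ) (hR : 0 ≤ R) : |trunc R x| ≤ R := by
  unfold trunc; split
  · assumption
  · simpa using hR

variable (hXm : Measurable X) (hM : 0 < M) (hρ : (10:ℝ) ≤ ρ)

local notation "w" => fun ω => |X ω| ^ ((2:ℝ)/3) / ((3/2)*M) ^ ((2:ℝ)/3)
local notation "G" => fun ω => Real.exp (|X ω| ^ ((2:ℝ)/3) / ((3/2)*M) ^ ((2:ℝ)/3))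
local notation "R" => M * ρ ^ ((3:ℝ)/2)

include hXm hM hρ

lemma ov_X_int (hGint : Integrable G μ) : Integrable X μ := by
  refine Integrable.mono' (hGint.const_mul (44*M)) hXm.aestronglyMeasurable
    (Filter.Eventually.of_forall fun ω => ?_)
  obtain ⟨h1, h2, h3⟩ := pt_w (abs_nonneg (X ω)) hM rfl
  simpa using pt_abs h2 hM h3

lemma ov_Xsq (hGint : Integrable G μ) (hG2 : ∫ ω, G ω ∂μ ≤ 2) :
    Integrable (fun ω => (X ω)^2) μ ∧ ∫ ω, (X ω)^2 ∂μ ≤ 122*M^2 := by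
  have hpt : ∀ ω, (X ω)^2 ≤ 61*M^2 * G ω := by
    intro ω
    obtain ⟨h1, h2, h3⟩ := pt_w (abs_nonneg (X ω)) hM rfl
    have := pt_cube h2 hM h3
    nlinarith [sq_abs (X ω)]
  have hint : Integrable (fun ω => (X ω)^2) μ := by
    refine Integrable.mono' (hGint.const_mul (61*M^2)) (hXm.pow_const 2).aestronglyMeasurable
      (Filter.Eventually.of_forall fun ω => ?_)
    simpa [abs_of_nonneg (sq_nonneg (X ω))] using hpt ω
  refine ⟨hint, ?_⟩
  calc ∫ ω, (X ω)^2 ∂μ ≤ ∫ ω, 61*M^2 * G ω ∂μ :=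
        integral_mono hint (hGint.const_mul _) hpt
    _ = 61*M^2 * ∫ ω, G ω ∂μ := integral_const_mul _ _
    _ ≤ 122*M^2 := by nlinarith [sq_nonneg M]

lemma ov_Z_abs (hGint : Integrable G μ) (hG2 : ∫ ω, G ω ∂μ ≤ 2) :
    Integrable (fun ω => X ω - trunc R (X ω)) μ ∧
    ∫ ω, |X ω - trunc R (X ω)| ∂μ ≤ 52*M*Real.exp (-(ρ/3)) := by
  have hρ0 : (0:ℝ) ≤ ρ := by linarith
  have hpt : ∀ ω, |X ω - trunc R (X ω)| ≤ 26*M*Real.exp (-(ρ/3)) * G ω := by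
    intro ω
    obtain ⟨h1, h2, h3⟩ := pt_w (abs_nonneg (X ω)) hM rfl
    unfold trunc; split
    · simpa using by positivity
    · rename_i hc
      push_neg at hc
      rw [sub_zero]
      have hwlb := pt_wlb (abs_nonneg (X ω)) hM hρ0 h1 hc.le
      exact pt_tail h2 hM hρ0 h3 hwlb
  have hZm : Measurable (fun ω => X ω - trunc R (X ω)) :=
    hXm.sub ((trunc_meas R).comp hXm)
  have hint : Integrable (fun ω => X ω - trunc R (X ω)) μ := by
    refine Integrable.mono' (hGint.const_mul (26*M*Real.exp (-(ρ/3))))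
      hZm.aestronglyMeasurable (Filter.Eventually.of_forall fun ω => hpt ω)
  refine ⟨hint, ?_⟩
  calc ∫ ω, |X ω - trunc R (X ω)| ∂μ ≤ ∫ ω, 26*M*Real.exp (-(ρ/3)) * G ω ∂μ :=
        integral_mono hint.abs (hGint.const_mul _)
          (fun ω => by simpa using hpt ω)
    _ = 26*M*Real.exp (-(ρ/3)) * ∫ ω, G ω ∂μ := integral_const_mul _ _
    _ ≤ 52*M*Real.exp (-(ρ/3)) := by
        have h := mul_le_mul_of_nonneg_left hG2
          (by positivity : (0:ℝ) ≤ 26*M*Real.exp (-(ρ/3)))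
        linarith

lemma ov_e_bound (hGint : Integrable G μ) (hG2 : ∫ ω, G ω ∂μ ≤ 2)
    (hX0 : ∫ ω, X ω ∂μ = 0) :
    |∫ ω, trunc R (X ω) ∂μ| ≤ 52*M*Real.exp (-(ρ/3)) := by
  obtain ⟨hZint, hZbd⟩ := ov_Z_abs hXm hM hρ hGint hG2
  have hXint := ov_X_int hXm hM hρ hGint
  have hYint : Integrable (fun ω => trunc R (X ω)) μ := by
    refine Integrable.mono' (integrable_const R) ((trunc_meas R).comp hXm).aestronglyMeasurable
      (Filter.Eventually.of_forall fun ω => trunc_abs_le R (X ω) (by positivity))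
  have hsplit : ∫ ω, trunc R (X ω) ∂μ = - ∫ ω, (X ω - trunc R (X ω)) ∂μ := by
    rw [integral_sub hXint hYint, hX0]; ring
  rw [hsplit, abs_neg]
  calc |∫ ω, (X ω - trunc R (X ω)) ∂μ| ≤ ∫ ω, |X ω - trunc R (X ω)| ∂μ := by
        simpa using norm_integral_le_integral_norm (μ := μ) (f := fun ω => X ω - trunc R (X ω))
    _ ≤ 52*M*Real.exp (-(ρ/3)) := hZbd

lemma ov_e_small (hGint : Integrable G μ) (hG2 : ∫ ω, G ω ∂μ ≤ 2)
    (hX0 : ∫ ω, X ω ∂μ = 0) :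
    |∫ ω, trunc R (X ω) ∂μ| ≤ 2*M := by
  have h1 := ov_e_bound hXm hM hρ hGint hG2 hX0
  have h2 : Real.exp (-(ρ/3)) ≤ 1/26 := by
    have h26 : (26:ℝ) ≤ Real.exp (ρ/3) :=
      le_trans num_exp103 (Real.exp_le_exp.2 (by linarith))
    rw [Real.exp_neg]
    have := inv_anti₀ (by norm_num : (0:ℝ) < 26) h26
    linarith
  nlinarith [hM]


lemma ov_mgf_Y (hGint : Integrable G μ) (hG2 : ∫ ω, G ω ∂μ ≤ 2)
    (hX0 : ∫ ω, X ω ∂μ = 0) {l s : ℝ} (hl0 : 0 ≤ l) (hl : l ≤ (4*(M * ρ ^ ((3:ℝ)/2)))⁻¹)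
    (hs : s = 1 ∨ s = -1) :
    Integrable (fun ω => Real.exp (l * (s*(trunc R (X ω)
        - ∫ ω', trunc R (X ω') ∂μ)))) μ ∧
    mgf (fun ω => s*(trunc R (X ω) - ∫ ω', trunc R (X ω') ∂μ)) μ l
      ≤ Real.exp (l^2 * (300*M^2)) := by
  have hR0 : (0:ℝ) < M * ρ ^ ((3:ℝ)/2) := by positivity
  set e : ℝ := ∫ ω', trunc R (X ω') ∂μ with he_def
  set f : Ω → ℝ := fun ω => s*(trunc R (X ω) - e) with hf_def
  have hYm : Measurable (fun ω => trunc R (X ω)) := (trunc_meas R).comp hXm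
  have hYb : ∀ ω, |trunc R (X ω)| ≤ M * ρ ^ ((3:ℝ)/2) :=
    fun ω => trunc_abs_le _ _ hR0.le
  have hYint : Integrable (fun ω => trunc R (X ω)) μ :=
    Integrable.mono' (integrable_const (M * ρ ^ ((3:ℝ)/2))) hYm.aestronglyMeasurable
      (Filter.Eventually.of_forall hYb)
  have heR : |e| ≤ M * ρ ^ ((3:ℝ)/2) := by
    have := norm_integral_le_of_norm_le_const (μ := μ)
      (f := fun ω => trunc R (X ω)) (C := M * ρ ^ ((3:ℝ)/2))
      (Filter.Eventually.of_forall fun ω => by simpa using hYb ω)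
    simpa using this
  have hs1 : |s| = 1 := by rcases hs with h | h <;> simp [h]
  have hs2 : s^2 = 1 := by rcases hs with h | h <;> simp [h]
  have hfb : ∀ ω, |f ω| ≤ 2*(M * ρ ^ ((3:ℝ)/2)) := by
    intro ω
    rw [hf_def, abs_mul, hs1, one_mul]
    calc |trunc R (X ω) - e| ≤ |trunc R (X ω)| + |e| := abs_sub _ _
      _ ≤ 2*(M * ρ ^ ((3:ℝ)/2)) := by linarith [hYb ω, heR]
  have hfm : Measurable f := (hYm.sub measurable_const).const_mul s
  have hfint : Integrable f μ :=
    Integrable.mono' (integrable_const (2*(M * ρ ^ ((3:ℝ)/2)))) hfm.aestronglyMeasurable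
      (Filter.Eventually.of_forall hfb)
  have hf0 : ∫ ω, f ω ∂μ = 0 := by
    rw [hf_def, integral_const_mul, integral_sub hYint (integrable_const e), integral_const]
    simp [he_def]
  have hfsqint : Integrable (fun ω => (f ω)^2) μ :=
    Integrable.mono' (integrable_const ((2*(M * ρ ^ ((3:ℝ)/2)))^2))
      (hfm.pow_const 2).aestronglyMeasurable
      (Filter.Eventually.of_forall fun ω => by
        rw [Real.norm_eq_abs, abs_of_nonneg (sq_nonneg (f ω))]
        exact sq_le_sq' (by linarith [(abs_le.1 (hfb ω)).1]) (abs_le.1 (hfb ω)).2)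
  obtain ⟨hXsqint, hXsq⟩ := ov_Xsq hXm hM hρ hGint hG2
  have heM : |e| ≤ 2*M := ov_e_small hXm hM hρ hGint hG2 hX0
  have hfsq : ∫ ω, (f ω)^2 ∂μ ≤ 300*M^2 := by
    have hpt : ∀ ω, (f ω)^2 ≤ 2*(X ω)^2 + 8*M^2 := by
      intro ω
      have h1 : (f ω)^2 = (trunc R (X ω) - e)^2 := by
        rw [hf_def]; rw [mul_pow, hs2, one_mul]
      have h2 : |trunc R (X ω)| ≤ |X ω| := by
        unfold trunc; split
        · exact le_rfl
        · simp
      have h3 : (trunc R (X ω) - e)^2 ≤ 2*(trunc R (X ω))^2 + 2*e^2 := by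
        nlinarith [sq_nonneg (trunc R (X ω) + e)]
      have h4 : (trunc R (X ω))^2 ≤ (X ω)^2 := by
        have := pow_le_pow_left₀ (abs_nonneg (trunc R (X ω))) h2 2
        rwa [sq_abs, sq_abs] at this
      have h5 : e^2 ≤ 4*M^2 := by
        have := pow_le_pow_left₀ (abs_nonneg e) heM 2
        rw [sq_abs] at this
        nlinarith
      linarith [h1, h3, h4, h5]
    have hint_2X : Integrable (fun ω => 2*(X ω)^2) μ := hXsqint.const_mul 2
    calc ∫ ω, (f ω)^2 ∂μ ≤ ∫ ω, (2*(X ω)^2 + 8*M^2) ∂μ :=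
          integral_mono hfsqint (hint_2X.add (integrable_const _)) hpt
      _ = 2*(∫ ω, (X ω)^2 ∂μ) + 8*M^2 := by
          rw [integral_add hint_2X (integrable_const _), integral_const_mul, integral_const]
          simp
      _ ≤ 300*M^2 := by nlinarith [sq_nonneg M]
  -- pointwise quadratic bound on the mgf integrand
  have hptq : ∀ ω, Real.exp (l * f ω) ≤ 1 + l * f ω + l^2 * (f ω)^2 := by
    intro ω
    have h1 : l * f ω ≤ 1 := by
      have := (abs_le.1 (hfb ω)).2
      have h2 : l * f ω ≤ l * (2*(M * ρ ^ ((3:ℝ)/2))) :=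
        mul_le_mul_of_nonneg_left this hl0
      have h3 : l * (2*(M * ρ ^ ((3:ℝ)/2))) ≤ 1/2 := by
        have hmul := mul_le_mul_of_nonneg_right hl
          (by positivity : (0:ℝ) ≤ 2*(M * ρ ^ ((3:ℝ)/2)))
        have heq : (4*(M * ρ ^ ((3:ℝ)/2)))⁻¹ * (2*(M * ρ ^ ((3:ℝ)/2))) = 1/2 := by
          field_simp; ring
        linarith [heq ▸ hmul]
      linarith
    have := aux_exp_quad h1
    calc Real.exp (l * f ω) ≤ 1 + l*f ω + (l*f ω)^2 := this
      _ = 1 + l * f ω + l^2 * (f ω)^2 := by ring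
  have hexpint : Integrable (fun ω => Real.exp (l * f ω)) μ :=
    Integrable.mono' (integrable_const (Real.exp (l * (2*(M * ρ ^ ((3:ℝ)/2))))))
      ((hfm.const_mul l).exp).aestronglyMeasurable
      (Filter.Eventually.of_forall fun ω => by
        rw [Real.norm_eq_abs, abs_of_nonneg (Real.exp_pos _).le]
        exact Real.exp_le_exp.2 (mul_le_mul_of_nonneg_left (abs_le.1 (hfb ω)).2 hl0))
  refine ⟨hexpint, ?_⟩
  have : mgf f μ l ≤ 1 + l^2 * (300*M^2) := by
    rw [mgf]
    have hint_lf : Integrable (fun ω => l * f ω) μ := hfint.const_mul l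
    have hint_lf2 : Integrable (fun ω => l^2 * (f ω)^2) μ := hfsqint.const_mul (l^2)
    have hint_sum : Integrable (fun ω => l * f ω + l^2 * (f ω)^2) μ := hint_lf.add hint_lf2
    calc ∫ ω, Real.exp (l * f ω) ∂μ ≤ ∫ ω, (1 + (l * f ω + l^2 * (f ω)^2)) ∂μ :=
          integral_mono hexpint ((integrable_const 1).add hint_sum)
            (fun ω => by have := hptq ω; simpa using by linarith)
      _ = 1 + (l * (∫ ω, f ω ∂μ) + l^2 * ∫ ω, (f ω)^2 ∂μ) := by
          rw [integral_add (integrable_const 1) hint_sum,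
            integral_add hint_lf hint_lf2]
          simp [integral_const_mul]
      _ ≤ 1 + l^2 * (300*M^2) := by
          rw [hf0]
          have := mul_le_mul_of_nonneg_left hfsq (sq_nonneg l)
          nlinarith [this]
  calc mgf f μ l ≤ 1 + l^2 * (300*M^2) := this
    _ ≤ Real.exp (l^2 * (300*M^2)) := by linarith [Real.add_one_le_exp (l^2 * (300*M^2))]


lemma ov_W_meas : Measurable (fun ω => |X ω - trunc (M * ρ ^ ((3:ℝ)/2)) (X ω)| ^ ((2:ℝ)/3)) := by
  have h : Measurable (fun ω => X ω - trunc (M * ρ ^ ((3:ℝ)/2)) (X ω)) :=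
    hXm.sub ((trunc_meas _).comp hXm)
  exact (Real.continuous_rpow_const (by norm_num : (0:ℝ) ≤ 2/3)).measurable.comp h.abs

lemma ov_mgf_W (hGint : Integrable G μ) (hG2 : ∫ ω, G ω ∂μ ≤ 2) :
    Integrable (fun ω => Real.exp (((12*M) ^ ((2:ℝ)/3))⁻¹ *
        (|X ω - trunc R (X ω)| ^ ((2:ℝ)/3)))) μ ∧
    mgf (fun ω => |X ω - trunc R (X ω)| ^ ((2:ℝ)/3)) μ (((12*M) ^ ((2:ℝ)/3))⁻¹)
      ≤ 1 + 2*Real.exp (-(ρ/2)) := by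
  have hρ0 : (0:ℝ) ≤ ρ := by linarith
  set lam : ℝ := ((12*M) ^ ((2:ℝ)/3))⁻¹ with hlam
  set W : Ω → ℝ := fun ω => |X ω - trunc R (X ω)| ^ ((2:ℝ)/3) with hW
  have hpt : ∀ ω, Real.exp (lam * W ω) ≤ 1 + Real.exp (-(ρ/2)) * G ω := by
    intro ω
    obtain ⟨h1, h2, h3⟩ := pt_w (abs_nonneg (X ω)) hM rfl
    rw [hW]
    simp only []
    unfold trunc
    split
    · rename_i hc
      rw [sub_self, abs_zero, Real.zero_rpow (by norm_num : ((2:ℝ)/3) ≠ 0), mul_zero,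
        Real.exp_zero]
      have : (0:ℝ) < Real.exp (-(ρ/2)) * Real.exp (|X ω| ^ ((2:ℝ)/3) / ((3/2)*M) ^ ((2:ℝ)/3)) := by
        positivity
      linarith
    · rename_i hc
      push_neg at hc
      rw [sub_zero]
      have hwlb := pt_wlb (abs_nonneg (X ω)) hM hρ0 h1 hc.le
      have hq := pt_quarter (abs_nonneg (X ω)) hM h1
      have hlw : lam * (|X ω| ^ ((2:ℝ)/3)) =
          (|X ω| ^ ((2:ℝ)/3) / ((3/2)*M) ^ ((2:ℝ)/3)) / 4 := by
        rw [hlam, mul_comm]; exact hq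
      rw [hlw]
      set wv : ℝ := |X ω| ^ ((2:ℝ)/3) / ((3/2)*M) ^ ((2:ℝ)/3)
      have : Real.exp (wv / 4) ≤ Real.exp (-(ρ/2)) * Real.exp wv := by
        rw [← Real.exp_add]
        exact Real.exp_le_exp.2 (by linarith)
      linarith
  have hWm : Measurable W := ov_W_meas hXm hM hρ
  have hint_dom : Integrable (fun ω => 1 + Real.exp (-(ρ/2)) * G ω) μ :=
    (integrable_const 1).add (hGint.const_mul _)
  have hexpint : Integrable (fun ω => Real.exp (lam * W ω)) μ := by
    refine Integrable.mono' hint_dom ((hWm.const_mul lam).exp).aestronglyMeasurable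
      (Filter.Eventually.of_forall fun ω => ?_)
    rw [Real.norm_eq_abs, abs_of_nonneg (Real.exp_pos _).le]
    exact hpt ω
  refine ⟨hexpint, ?_⟩
  rw [mgf]
  calc ∫ ω, Real.exp (lam * W ω) ∂μ ≤ ∫ ω, (1 + Real.exp (-(ρ/2)) * G ω) ∂μ :=
        integral_mono hexpint hint_dom hpt
    _ = 1 + Real.exp (-(ρ/2)) * ∫ ω, G ω ∂μ := by
        rw [integral_add (integrable_const 1) (hGint.const_mul _), integral_const,
          integral_const_mul]
        simp
    _ ≤ 1 + 2*Real.exp (-(ρ/2)) := by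
        have := mul_le_mul_of_nonneg_left hG2 (Real.exp_pos (-(ρ/2))).le
        linarith

end OV



set_option maxHeartbeats 2000000 in
/-- Götze–Sambale–Sinulis concentration for `α = 2/3` sub-exponential variables:
there is an absolute constant `C` such that for independent mean-zero `X₁,…,Xₙ` with
`‖Xᵢ‖_{ψ_{2/3}} ≤ M`, for all `t > 0`,
`P(|(1/n)∑ Xᵢ| ≥ t) ≤ 2 exp(-(1/C) min(t²n/M², tn/M, (tn/M)^{2/3}))`. -/
theorem stmt_16 :
    ∃ C : ℝ, 0 < C ∧
      ∀ (n : ℕ) (Ω : Type) (_ : MeasurableSpace Ω) (μ : Measure Ω),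
        IsProbabilityMeasure μ →
        ∀ (X : Fin n → Ω → ℝ), (∀ i, Measurable (X i)) →
        ProbabilityTheory.iIndepFun X μ →
        (∀ i, ∫ ω, X i ω ∂μ = 0) →
        ∀ M : ℝ, 0 < M → (∀ i, psiNorm μ (2 / 3) (X i) ≤ ENNReal.ofReal M) →
        ∀ t : ℝ, 0 < t →
          (μ {ω | t ≤ |(1 / (n : ℝ)) * ∑ i, X i ω|}).toReal ≤
            2 * Real.exp (-(1 / C) *
              min (min (t ^ 2 * n / M ^ 2) (t * n / M)) ((t * n / M) ^ ((2 : ℝ) / 3))) := by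
  refine ⟨1000000, by norm_num, ?_⟩
  intro n Ω mΩ μ hprob X hXm hind hX0 M hM hpsi t ht
  haveI := hprob
  set N : ℝ := (n : ℝ) with hN_def
  set m : ℝ := min (min (t ^ 2 * N / M ^ 2) (t * N / M)) ((t * N / M) ^ ((2 : ℝ) / 3))
    with hm_def
  by_cases hcase : m ≤ 1000000 * Real.log 2
  · -- trivial case: RHS ≥ 1
    have h1 : (μ {ω | t ≤ |(1 / N) * ∑ i, X i ω|}).toReal ≤ 1 := by
      calc (μ {ω | t ≤ |(1 / N) * ∑ i, X i ω|}).toReal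
          ≤ (μ Set.univ).toReal :=
            ENNReal.toReal_mono (measure_ne_top μ _) (measure_mono (Set.subset_univ _))
        _ = 1 := by simp
    have h2 : (1:ℝ) ≤ 2 * Real.exp (-(1/1000000) * m) := by
      have h3 : Real.exp (-Real.log 2) ≤ Real.exp (-(1/1000000) * m) :=
        Real.exp_le_exp.2 (by nlinarith)
      rw [Real.exp_neg, Real.exp_log (by norm_num : (0:ℝ) < 2)] at h3
      linarith
    exact le_trans h1 h2
  push_neg at hcase
  have hlog2 : (0.6931471803:ℝ) < Real.log 2 := Real.log_two_gt_d9
  have hm_big : (531441:ℝ) ≤ m := by nlinarith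
  have hn0 : n ≠ 0 := by
    rintro rfl
    have hN0 : N = 0 := by simp [hN_def]
    have hm0 : m = 0 := by
      rw [hm_def, hN0]
      simp [Real.zero_rpow (by norm_num : ((2:ℝ)/3) ≠ 0)]
    linarith
  have hN1 : (1:ℝ) ≤ N := by
    rw [hN_def]; exact_mod_cast Nat.one_le_iff_ne_zero.2 hn0
  have hNpos : (0:ℝ) < N := by linarith
  set u : ℝ := t * N / M with hu_def
  have hu0 : 0 < u := div_pos (mul_pos ht hNpos) hM
  have hmu23 : m ≤ u ^ ((2:ℝ)/3) := min_le_right _ _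
  have hmq : m ≤ t^2*N/M^2 := le_trans (min_le_left _ _) (min_le_left _ _)
  have hm0 : 0 < m := by linarith
  have hu1 : 1 ≤ u := by
    by_contra h
    push_neg at h
    have : u ^ ((2:ℝ)/3) ≤ 1 := Real.rpow_le_one hu0.le h.le (by norm_num)
    linarith
  have hqN : t^2*N/M^2 = u^2/N := by
    rw [hu_def]; field_simp
  have hu_sq : 531441 * N ≤ u^2 := by
    rw [hqN] at hmq
    rw [le_div_iff₀ hNpos] at hmq
    nlinarith
  have hu_sqrt : 729 * Real.sqrt N ≤ u := by
    have h1 : Real.sqrt (531441*N) ≤ Real.sqrt (u^2) := Real.sqrt_le_sqrt hu_sq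
    rw [Real.sqrt_sq hu0.le] at h1
    rw [show (531441:ℝ) = 729^2 by norm_num, Real.sqrt_mul (by positivity) N,
      Real.sqrt_sq (by norm_num : (0:ℝ) ≤ 729)] at h1
    exact h1
  set ρ : ℝ := 6*Real.log (208*N) + 10 with hρ_def
  have hlog208 : 0 ≤ Real.log (208*N) := Real.log_nonneg (by nlinarith)
  have hρ10 : (10:ℝ) ≤ ρ := by rw [hρ_def]; linarith
  have hρpos : (0:ℝ) < ρ := by linarith
  have hρ32pos : (0:ℝ) < ρ ^ ((3:ℝ)/2) := Real.rpow_pos_of_pos hρpos _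
  have hR0 : (0:ℝ) < M * ρ ^ ((3:ℝ)/2) := mul_pos hM hρ32pos
  have hGfacts := fun i => psi_G μ (X i) (hXm i) M hM (hpsi i)
  -- per-variable truncated means
  set e : Fin n → ℝ := fun i => ∫ ω, trunc (M * ρ ^ ((3:ℝ)/2)) (X i ω) ∂μ with he_def
  have het : ∀ i, |e i| ≤ t/4 := by
    intro i
    have h1 := ov_e_bound (hXm i) hM hρ10 (hGfacts i).1 (hGfacts i).2 (hX0 i)
    have hlr : Real.log (208*N) ≤ ρ/3 := by rw [hρ_def]; linarith
    have h2 : Real.exp (-(ρ/3)) ≤ (208*N)⁻¹ := by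
      calc Real.exp (-(ρ/3)) ≤ Real.exp (-Real.log (208*N)) :=
            Real.exp_le_exp.2 (by linarith)
        _ = (208*N)⁻¹ := by rw [Real.exp_neg, Real.exp_log (by nlinarith)]
    have h3 : M ≤ t*N := by
      have h4 := hu1
      rw [hu_def, le_div_iff₀ hM] at h4
      linarith
    have heq : 52*M*(208*N)⁻¹ = M/(4*N) := by
      field_simp
      ring
    have h6 : M/(4*N) ≤ t/4 := by
      rw [div_le_div_iff₀ (by positivity) (by norm_num)]
      nlinarith
    have h5 : 52*M*Real.exp (-(ρ/3)) ≤ 52*M*(208*N)⁻¹ := by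
      have := mul_le_mul_of_nonneg_left h2 (by positivity : (0:ℝ) ≤ 52*M)
      linarith
    calc |e i| ≤ 52*M*Real.exp (-(ρ/3)) := h1
      _ ≤ t/4 := by linarith [heq ▸ h5]
  ---- Part A : the two centered-truncated sums
  have hA : ∀ s : ℝ, (s = 1 ∨ s = -1) →
      (μ {ω | t*N/4 ≤ (∑ i, fun ω' => s * (trunc (M * ρ ^ ((3:ℝ)/2)) (X i ω') - e i)) ω}).toReal
        ≤ Real.exp (-(2*m/1000000)) := by
    intro s hs
    set lam1 : ℝ := min (t/(2400*M^2)) ((4*(M * ρ ^ ((3:ℝ)/2)))⁻¹) with hlam1_def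
    have hlam10 : 0 ≤ lam1 := le_min (by positivity) (by positivity)
    have hlam1R : lam1 ≤ (4*(M * ρ ^ ((3:ℝ)/2)))⁻¹ := min_le_right _ _
    set F : Fin n → Ω → ℝ :=
      fun i => (fun x => s * (trunc (M * ρ ^ ((3:ℝ)/2)) x - e i)) ∘ (X i) with hF_def
    have hgm : ∀ i, Measurable (fun x => s * (trunc (M * ρ ^ ((3:ℝ)/2)) x - e i)) :=
      fun i => ((trunc_meas _).sub measurable_const).const_mul s
    have hmeasF : ∀ i, Measurable (F i) := fun i => (hgm i).comp (hXm i)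
    have hindF : iIndepFun F μ := hind.comp _ hgm
    have hmgfY := fun i =>
      ov_mgf_Y (μ := μ) (hXm i) hM hρ10 (hGfacts i).1 (hGfacts i).2 (hX0 i) hlam10 hlam1R hs
    have hintsum : Integrable (fun ω => Real.exp (lam1 * (∑ i, F i) ω)) μ :=
      hindF.integrable_exp_mul_sum hmeasF (fun i _ => (hmgfY i).1)
    have hcher := measure_ge_le_exp_mul_mgf (μ := μ) (X := ∑ i, F i) (t := lam1)
      (t*N/4) hlam10 hintsum
    have hprod : mgf (∑ i, F i) μ lam1 ≤ Real.exp (lam1^2 * (300*M^2)) ^ n := by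
      rw [hindF.mgf_sum hmeasF]
      calc ∏ i, mgf (F i) μ lam1 ≤ ∏ _i : Fin n, Real.exp (lam1^2 * (300*M^2)) :=
            Finset.prod_le_prod (fun i _ => mgf_nonneg) (fun i _ => (hmgfY i).2)
        _ = Real.exp (lam1^2 * (300*M^2)) ^ n := by
            rw [Finset.prod_const, Finset.card_univ, Fintype.card_fin]
    have hexpo : -lam1 * (t*N/4) + N * (lam1^2 * (300*M^2)) ≤ -(2*m/1000000) := by
      rcases le_or_gt (t/(2400*M^2)) ((4*(M * ρ ^ ((3:ℝ)/2)))⁻¹) with hc | hc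
      · have hl1 : lam1 = t/(2400*M^2) := by rw [hlam1_def, min_eq_left hc]
        have heq : -lam1 * (t*N/4) + N * (lam1^2 * (300*M^2)) = -(t^2*N/M^2)/19200 := by
          rw [hl1]; field_simp; ring
        rw [heq]
        have : m/19200 ≤ (t^2*N/M^2)/19200 := by linarith
        linarith
      · have hl1 : lam1 = (4*(M * ρ ^ ((3:ℝ)/2)))⁻¹ := by
          rw [hlam1_def, min_eq_right hc.le]
        have hkey : 2400*M^2 < t*(4*(M * ρ ^ ((3:ℝ)/2))) := by
          rw [inv_eq_one_div, div_lt_div_iff₀ (by positivity) (by positivity)] at hc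
          linarith
        have heq : -lam1 * (t*N/4) + N * (lam1^2 * (300*M^2))
            = -(t*N)/(16*(M * ρ ^ ((3:ℝ)/2))) + 300*N*M^2/(16*(M * ρ ^ ((3:ℝ)/2))^2) := by
          rw [hl1]; field_simp; ring
        have hdd : 300*N*M^2/(16*(M * ρ ^ ((3:ℝ)/2))^2) ≤ t*N/(32*(M * ρ ^ ((3:ℝ)/2))) := by
          rw [div_le_div_iff₀ (by positivity) (by positivity)]
          have hkey' := mul_le_mul_of_nonneg_right hkey.le
            (mul_nonneg (mul_nonneg hM.le hρ32pos.le) hNpos.le)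
          nlinarith [hkey']
        have hfinal : 2*m/1000000 ≤ t*N/(32*(M * ρ ^ ((3:ℝ)/2))) := by
          have htNu : t*N = u*M := by rw [hu_def]; field_simp
          have hρub : ρ ≤ 100 * N ^ ((1:ℝ)/9) := by rw [hρ_def]; exact num_rho_ub hN1
          have hρ32 : ρ ^ ((3:ℝ)/2) ≤ 1000 * N ^ ((1:ℝ)/6) := num_rho32 hN1 hρpos.le hρub
          have hu13 : 9 * N ^ ((1:ℝ)/6) ≤ u ^ ((1:ℝ)/3) := num_u13 hN1 hu_sqrt
          have hsplit : u ^ ((2:ℝ)/3) * u ^ ((1:ℝ)/3) = u := by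
            rw [← Real.rpow_add hu0]; norm_num
          have hN16 : (0:ℝ) ≤ N ^ ((1:ℝ)/6) := by positivity
          have hu23 : (0:ℝ) ≤ u ^ ((2:ℝ)/3) := by positivity
          have ha : m * ρ ^ ((3:ℝ)/2) ≤ u ^ ((2:ℝ)/3) * (1000 * N ^ ((1:ℝ)/6)) :=
            mul_le_mul hmu23 hρ32 hρ32pos.le hu23
          have hb : u ^ ((2:ℝ)/3) * (9 * N ^ ((1:ℝ)/6)) ≤ u ^ ((2:ℝ)/3) * u ^ ((1:ℝ)/3) :=
            mul_le_mul_of_nonneg_left hu13 hu23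
          rw [hsplit] at hb
          -- m * ρ^{3/2} ≤ (1000/9) u
          have hc2 : 9 * (m * ρ ^ ((3:ℝ)/2)) ≤ 1000 * u := by nlinarith
          rw [htNu]
          have heq3 : u*M/(32*(M * ρ ^ ((3:ℝ)/2))) = u/(32*ρ ^ ((3:ℝ)/2)) := by
            field_simp
          rw [heq3, div_le_div_iff₀ (by norm_num) (by positivity)]
          have hre : 2*m*(32*ρ^((3:ℝ)/2)) = 64*(m*ρ^((3:ℝ)/2)) := by ring
          rw [hre]
          linarith [hc2, hu0.le]
        have hhalf : -(t*N)/(16*(M * ρ ^ ((3:ℝ)/2)))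
            = -(t*N/(32*(M * ρ ^ ((3:ℝ)/2)))) - (t*N/(32*(M * ρ ^ ((3:ℝ)/2)))) := by
          ring
        linarith [heq, hdd, hfinal, hhalf]
    calc (μ {ω | t*N/4 ≤ (∑ i, fun ω' => s * (trunc (M * ρ ^ ((3:ℝ)/2)) (X i ω') - e i)) ω}).toReal
        ≤ Real.exp (-lam1 * (t*N/4)) * mgf (∑ i, F i) μ lam1 := hcher
      _ ≤ Real.exp (-lam1 * (t*N/4)) * Real.exp (lam1^2 * (300*M^2)) ^ n :=
          mul_le_mul_of_nonneg_left hprod (Real.exp_pos _).le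
      _ = Real.exp (-lam1 * (t*N/4) + N * (lam1^2 * (300*M^2))) := by
          rw [← Real.exp_nat_mul, ← Real.exp_add, hN_def]
      _ ≤ Real.exp (-(2*m/1000000)) := Real.exp_le_exp.2 hexpo
  ---- Part B : the big-jump sum
  have hB : (μ {ω | (t*N/2) ^ ((2:ℝ)/3) ≤
      (∑ i, fun ω' => |X i ω' - trunc (M * ρ ^ ((3:ℝ)/2)) (X i ω')| ^ ((2:ℝ)/3)) ω}).toReal
        ≤ Real.exp (-(m/1000000)) := by
    set lam2 : ℝ := ((12*M) ^ ((2:ℝ)/3))⁻¹ with hlam2_def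
    have hlam20 : 0 ≤ lam2 := by positivity
    set W : Fin n → Ω → ℝ :=
      fun i => (fun x => |x - trunc (M * ρ ^ ((3:ℝ)/2)) x| ^ ((2:ℝ)/3)) ∘ (X i) with hW_def
    have hgm : Measurable (fun x : ℝ => |x - trunc (M * ρ ^ ((3:ℝ)/2)) x| ^ ((2:ℝ)/3)) := by
      apply ((Real.continuous_rpow_const (by norm_num : (0:ℝ) ≤ 2/3)).measurable).comp
      exact (measurable_id.sub (trunc_meas _)).abs
    have hmeasW : ∀ i, Measurable (W i) := fun i => hgm.comp (hXm i)
    have hindW : iIndepFun W μ := hind.comp _ (fun _ => hgm)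
    have hmgfW := fun i : Fin n =>
      ov_mgf_W (μ := μ) (ρ := ρ) (hXm i) hM hρ10 (hGfacts i).1 (hGfacts i).2
    have hintsum : Integrable (fun ω => Real.exp (lam2 * (∑ i, W i) ω)) μ :=
      hindW.integrable_exp_mul_sum hmeasW (fun i _ => (hmgfW i).1)
    have hcher := measure_ge_le_exp_mul_mgf (μ := μ) (X := ∑ i, W i) (t := lam2)
      ((t*N/2) ^ ((2:ℝ)/3)) hlam20 hintsum
    -- product of mgfs ≤ exp(1/2)
    have hsmall : 1 + 2*Real.exp (-(ρ/2)) ≤ Real.exp (1/(2*N)) := by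
      have hlr : Real.log (4*N) ≤ ρ/2 := by
        rw [hρ_def]
        have : Real.log (4*N) ≤ Real.log (208*N) :=
          Real.log_le_log (by nlinarith) (by nlinarith)
        linarith
      have h2 : Real.exp (-(ρ/2)) ≤ (4*N)⁻¹ := by
        calc Real.exp (-(ρ/2)) ≤ Real.exp (-Real.log (4*N)) :=
              Real.exp_le_exp.2 (by linarith)
          _ = (4*N)⁻¹ := by rw [Real.exp_neg, Real.exp_log (by nlinarith)]
      have h3 : 2*Real.exp (-(ρ/2)) ≤ 1/(2*N) := by
        rw [inv_eq_one_div] at h2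
        rw [show (1:ℝ)/(2*N) = 2*(1/(4*N)) by ring]
        linarith
      linarith [Real.add_one_le_exp (1/(2*N))]
    have hprod : mgf (∑ i, W i) μ lam2 ≤ Real.exp (1/2) := by
      rw [hindW.mgf_sum hmeasW]
      calc ∏ i, mgf (W i) μ lam2 ≤ ∏ _i : Fin n, Real.exp (1/(2*N)) :=
            Finset.prod_le_prod (fun i _ => mgf_nonneg)
              (fun i _ => le_trans (hmgfW i).2 hsmall)
        _ = Real.exp (1/(2*N)) ^ n := by
            rw [Finset.prod_const, Finset.card_univ, Fintype.card_fin]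
        _ = Real.exp (N * (1/(2*N))) := by rw [← Real.exp_nat_mul, hN_def]
        _ = Real.exp (1/2) := by
            congr 1
            field_simp
    -- exponent
    have hexpo : lam2 * ((t*N/2) ^ ((2:ℝ)/3)) ≥ m/9 := by
      have h24 : (24:ℝ) ^ ((2:ℝ)/3) ≤ 9 := by
        have h1 : ((24:ℝ) ^ ((2:ℝ)/3)) = ((24:ℝ)^(2:ℕ)) ^ ((1:ℝ)/3) := by
          rw [← Real.rpow_natCast (24:ℝ) 2, ← Real.rpow_mul (by norm_num)]
          norm_num
        have h2 : ((24:ℝ)^(2:ℕ) : ℝ) ^ ((1:ℝ)/3) ≤ ((9:ℝ)^(3:ℕ) : ℝ) ^ ((1:ℝ)/3) :=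
          Real.rpow_le_rpow (by norm_num) (by norm_num) (by norm_num)
        have h3 : ((9:ℝ)^(3:ℕ) : ℝ) ^ ((1:ℝ)/3) = 9 := by
          rw [← Real.rpow_natCast (9:ℝ) 3, ← Real.rpow_mul (by norm_num)]
          norm_num
        rw [h1]
        linarith [h3 ▸ h2]
      have hquot : lam2 * ((t*N/2) ^ ((2:ℝ)/3)) = (u/24) ^ ((2:ℝ)/3) := by
        rw [show u/24 = (t*N/2)/(12*M) by rw [hu_def]; field_simp; ring]
        rw [Real.div_rpow (by positivity : (0:ℝ) ≤ t*N/2) (by positivity : (0:ℝ) ≤ 12*M),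
          hlam2_def]
        ring
      have hsplit : (u/24) ^ ((2:ℝ)/3) = u ^ ((2:ℝ)/3) / (24:ℝ) ^ ((2:ℝ)/3) := by
        rw [Real.div_rpow hu0.le (by norm_num)]
      have h249 : u ^ ((2:ℝ)/3) / (24:ℝ) ^ ((2:ℝ)/3) ≥ u ^ ((2:ℝ)/3)/9 := by
        apply div_le_div_of_nonneg_left (by positivity) (by positivity) h24
      have hm9 : m/9 ≤ u ^ ((2:ℝ)/3)/9 := by linarith
      rw [hquot, hsplit]
      linarith
    calc (μ {ω | (t*N/2) ^ ((2:ℝ)/3) ≤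
          (∑ i, fun ω' => |X i ω' - trunc (M * ρ ^ ((3:ℝ)/2)) (X i ω')| ^ ((2:ℝ)/3)) ω}).toReal
        ≤ Real.exp (-lam2 * ((t*N/2) ^ ((2:ℝ)/3))) * mgf (∑ i, W i) μ lam2 := hcher
      _ ≤ Real.exp (-lam2 * ((t*N/2) ^ ((2:ℝ)/3))) * Real.exp (1/2) :=
          mul_le_mul_of_nonneg_left hprod (Real.exp_pos _).le
      _ = Real.exp (-lam2 * ((t*N/2) ^ ((2:ℝ)/3)) + 1/2) := by rw [← Real.exp_add]
      _ ≤ Real.exp (-(m/1000000)) := by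
          apply Real.exp_le_exp.2
          have := hexpo
          nlinarith [hm_big]
  ---- event inclusion
  have hsub : {ω | t ≤ |(1 / N) * ∑ i, X i ω|} ⊆
      ({ω | t*N/4 ≤ (∑ i, fun ω' => (1:ℝ) * (trunc (M * ρ ^ ((3:ℝ)/2)) (X i ω') - e i)) ω} ∪
       {ω | t*N/4 ≤ (∑ i, fun ω' => (-1:ℝ) * (trunc (M * ρ ^ ((3:ℝ)/2)) (X i ω') - e i)) ω}) ∪
      {ω | (t*N/2) ^ ((2:ℝ)/3) ≤
        (∑ i, fun ω' => |X i ω' - trunc (M * ρ ^ ((3:ℝ)/2)) (X i ω')| ^ ((2:ℝ)/3)) ω} := by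
    intro ω hω
    simp only [Set.mem_setOf_eq, Set.mem_union, Finset.sum_apply] at hω ⊢
    by_contra hcon
    push_neg at hcon
    obtain ⟨⟨hc1, hc2⟩, hc3⟩ := hcon
    have hZlt : ∑ i, |X i ω - trunc (M * ρ ^ ((3:ℝ)/2)) (X i ω)| < t*N/2 := by
      by_contra hZ
      push_neg at hZ
      have h1 : (t*N/2) ^ ((2:ℝ)/3)
          ≤ (∑ i, |X i ω - trunc (M * ρ ^ ((3:ℝ)/2)) (X i ω)|) ^ ((2:ℝ)/3) :=
        Real.rpow_le_rpow (by positivity) hZ (by norm_num)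
      have h2 := aux_sum_rpow Finset.univ
        (fun i => |X i ω - trunc (M * ρ ^ ((3:ℝ)/2)) (X i ω)|) (fun i => abs_nonneg _)
      exact absurd (le_trans h1 h2) (not_le.2 hc3)
    have habs1 : |∑ i, (trunc (M * ρ ^ ((3:ℝ)/2)) (X i ω) - e i)| < t*N/4 := by
      rw [abs_lt]
      constructor
      · have := hc2
        simp only [neg_one_mul, Finset.sum_neg_distrib] at this
        linarith
      · have := hc1
        simp only [one_mul] at this
        linarith
    have hesum : |∑ i, e i| ≤ N * (t/4) := by
      calc |∑ i, e i| ≤ ∑ i, |e i| := Finset.abs_sum_le_sum_abs _ _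
        _ ≤ n • (t/4) := Finset.sum_le_card_nsmul _ _ _ (fun i _ => het i) |>.trans
            (by rw [Finset.card_univ, Fintype.card_fin])
        _ = N * (t/4) := by rw [nsmul_eq_mul, hN_def]
    have hdecomp : ∑ i, X i ω = (∑ i, (trunc (M * ρ ^ ((3:ℝ)/2)) (X i ω) - e i))
        + ((∑ i, e i) + ∑ i, (X i ω - trunc (M * ρ ^ ((3:ℝ)/2)) (X i ω))) := by
      rw [← Finset.sum_add_distrib, ← Finset.sum_add_distrib]
      apply Finset.sum_congr rfl
      intro i _
      ring
    have htN : t * N ≤ |∑ i, X i ω| := by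
      have h1 : |(1/N) * ∑ i, X i ω| = (1/N) * |∑ i, X i ω| := by
        rw [abs_mul, abs_of_pos (by positivity : (0:ℝ) < 1/N)]
      rw [h1] at hω
      calc t*N = (t) * N := rfl
        _ ≤ ((1/N) * |∑ i, X i ω|) * N := by
            apply mul_le_mul_of_nonneg_right hω hNpos.le
        _ = |∑ i, X i ω| := by field_simp
    have hZabs : |∑ i, (X i ω - trunc (M * ρ ^ ((3:ℝ)/2)) (X i ω))|
        ≤ ∑ i, |X i ω - trunc (M * ρ ^ ((3:ℝ)/2)) (X i ω)| := Finset.abs_sum_le_sum_abs _ _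
    have : |∑ i, X i ω| < t*N := by
      rw [hdecomp]
      calc |(∑ i, (trunc (M * ρ ^ ((3:ℝ)/2)) (X i ω) - e i))
            + ((∑ i, e i) + ∑ i, (X i ω - trunc (M * ρ ^ ((3:ℝ)/2)) (X i ω)))|
          ≤ |∑ i, (trunc (M * ρ ^ ((3:ℝ)/2)) (X i ω) - e i)|
            + (|∑ i, e i| + |∑ i, (X i ω - trunc (M * ρ ^ ((3:ℝ)/2)) (X i ω))|) := by
            apply le_trans (abs_add_le _ _)
            gcongr
            exact abs_add_le _ _
        _ < t*N/4 + (N*(t/4) + t*N/2) := by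
            apply add_lt_add_of_lt_of_le habs1
            apply add_le_add hesum
            linarith [hZlt, hZabs]
        _ = t*N := by ring
    linarith [htN, this]
  ---- combine
  have hA1 := hA 1 (Or.inl rfl)
  have hA2 := hA (-1) (Or.inr rfl)
  set S1 := {ω | t*N/4 ≤ (∑ i, fun ω' => (1:ℝ) * (trunc (M * ρ ^ ((3:ℝ)/2)) (X i ω') - e i)) ω}
  set S2 := {ω | t*N/4 ≤ (∑ i, fun ω' => (-1:ℝ) * (trunc (M * ρ ^ ((3:ℝ)/2)) (X i ω') - e i)) ω}
  set S3 := {ω | (t*N/2) ^ ((2:ℝ)/3) ≤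
    (∑ i, fun ω' => |X i ω' - trunc (M * ρ ^ ((3:ℝ)/2)) (X i ω')| ^ ((2:ℝ)/3)) ω}
  have hmeasle : (μ {ω | t ≤ |(1 / N) * ∑ i, X i ω|}).toReal
      ≤ (μ S1).toReal + (μ S2).toReal + (μ S3).toReal := by
    have hle : μ {ω | t ≤ |(1 / N) * ∑ i, X i ω|} ≤ μ S1 + μ S2 + μ S3 :=
      le_trans (measure_mono hsub)
        (le_trans (measure_union_le _ _) (add_le_add_left (measure_union_le _ _) _))
    have hne1 : μ S1 ≠ ⊤ := measure_ne_top μ _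
    have hne2 : μ S2 ≠ ⊤ := measure_ne_top μ _
    have hne3 : μ S3 ≠ ⊤ := measure_ne_top μ _
    calc (μ {ω | t ≤ |(1 / N) * ∑ i, X i ω|}).toReal
        ≤ (μ S1 + μ S2 + μ S3).toReal :=
          ENNReal.toReal_mono (by finiteness) hle
      _ = (μ S1).toReal + (μ S2).toReal + (μ S3).toReal := by
          rw [ENNReal.toReal_add (by finiteness) hne3, ENNReal.toReal_add hne1 hne2]
  have hE2 : Real.exp (-(2*m/1000000)) = Real.exp (-(m/1000000)) ^ 2 := by
    rw [sq, ← Real.exp_add]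
    congr 1
    ring
  have hEhalf : Real.exp (-(m/1000000)) ≤ 1/2 := by
    have h1 : Real.exp (-(m/1000000)) ≤ Real.exp (-Real.log 2) :=
      Real.exp_le_exp.2 (by nlinarith)
    have h2 : Real.exp (-Real.log 2) = (2:ℝ)⁻¹ := by
      rw [Real.exp_neg, Real.exp_log (by norm_num : (0:ℝ) < 2)]
    rw [h2] at h1
    linarith
  have hfin : (μ S1).toReal + (μ S2).toReal + (μ S3).toReal
      ≤ 2 * Real.exp (-(1/1000000) * m) := by
    have hEpos := Real.exp_pos (-(m/1000000))
    have harg : -(1/1000000) * m = -(m/1000000) := by ring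
    rw [harg]
    have h1 : (μ S1).toReal ≤ Real.exp (-(m/1000000)) ^ 2 := hE2 ▸ hA1
    have h2 : (μ S2).toReal ≤ Real.exp (-(m/1000000)) ^ 2 := hE2 ▸ hA2
    nlinarith [hB, hEhalf, hEpos]
  linarith [hmeasle, hfin]
end
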